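/- Let n ≥ 1 and let H̃ be an n×n matrix in T_{A,n}, and let α > 0 and β > 0. Then there exists a spring-mass system with positive masses m̃_1,…,m̃_n and positive spring constants K̃_1,…,K̃_{n+1} whose associated matrix M̃^{-1/2} B̃ M̃^{-1/2} equals H̃ and which satisfies K̃_1/√(m̃_1) = α and K̃_{n+1}/√(m̃_n) = β. -/

import Mathlib

open Matrix

/-- The stiffness matrix of a spring-mass system with spring constants `K 0, …, K n`
(`n × n`, tridiagonal, with `B j j = K j + K (j+1)` and off-diagonal entries `-K (j+1)`). -/
noncomputable def stiffB (n : ℕ) (K : Fin (n + 1) → ℝ) : Matrix (Fin n) (Fin n) ℝ :=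
  Matrix.of fun i j =>
    if (i : ℕ) = (j : ℕ) then K i.castSucc + K i.succ
    else if (i : ℕ) + 1 = (j : ℕ) then -K i.succ
    else if (j : ℕ) + 1 = (i : ℕ) then -K j.succ
    else 0

/-- The associated matrix `H = M^{-1/2} B M^{-1/2}` of a spring-mass system with
masses `m` and spring constants `K`. -/
noncomputable def assocH (n : ℕ) (m : Fin n → ℝ) (K : Fin (n + 1) → ℝ) :
    Matrix (Fin n) (Fin n) ℝ :=
  Matrix.diagonal (fun i => (Real.sqrt (m i))⁻¹) * stiffB n K *
    Matrix.diagonal (fun i => (Real.sqrt (m i))⁻¹)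

/-- A matrix is tridiagonal: entries vanish when the indices differ by more than one. -/
def IsTridiagonal {n : ℕ} (H : Matrix (Fin n) (Fin n) ℝ) : Prop :=
  ∀ i j : Fin n, ((i : ℕ) + 1 < (j : ℕ) ∨ (j : ℕ) + 1 < (i : ℕ)) → H i j = 0

/-- The set `T_{A,n}`: real symmetric tridiagonal matrices with negative sub- and
super-diagonal entries which are positive definite. -/
def MemTA {n : ℕ} (H : Matrix (Fin n) (Fin n) ℝ) : Prop :=
  H.IsSymm ∧ IsTridiagonal H ∧
    (∀ i j : Fin n, ((i : ℕ) + 1 = (j : ℕ) ∨ (j : ℕ) + 1 = (i : ℕ)) → H i j < 0) ∧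
    H.PosDef

/-!
Since `H̃` is a positive definite matrix with nonpositive off-diagonal entries, it is
inverse-positive: the solution `u` of `H̃ u = α e₁ + β eₙ` is nonnegative. A vanishing `uᵢ`
would force `(H̃ u)ᵢ < 0` as soon as `uᵢ₋₁ > 0` (or `(H̃ u)₁ ≤ 0` for `i = 1`), so `u > 0`.
Take masses `mᵢ = uᵢ²`. The matrix `D H̃ D` with `D = diag u` is symmetric and tridiagonal
with negative superdiagonal, and its row sums are `D H̃ u = α u₁ e₁ + β uₙ eₙ`. A symmetric
tridiagonal matrix is a stiffness matrix as soon as its row sums vanish in the interior rows,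
so `D H̃ D = B(K)` for the springs `K₁ = α u₁`, `Kₙ₊₁ = β uₙ` and `Kⱼ₊₁ = -(D H̃ D)ⱼ,ⱼ₊₁`.
Then `M^{-1/2} B M^{-1/2} = D⁻¹ (D H̃ D) D⁻¹ = H̃`.
-/

open Finset

namespace Matrix

variable {ι : Type*} [Fintype ι]

theorem ext_of_offDiag_of_mulVec_one {R : Type*} [NonAssocRing R] [DecidableEq ι]
    {A B : Matrix ι ι R} (hoff : ∀ i j, i ≠ j → A i j = B i j) (hrow : A *ᵥ 1 = B *ᵥ 1) :
    A = B := by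
  ext i j
  obtain rfl | hij := eq_or_ne i j
  · have hi := congrFun hrow i
    simp only [mulVec, dotProduct, Pi.one_apply, mul_one] at hi
    rw [← add_sum_erase _ _ (mem_univ i), ← add_sum_erase _ _ (mem_univ i),
      sum_congr rfl fun j hj => hoff i j (ne_of_mem_erase hj).symm] at hi
    exact add_right_cancel hi
  · exact hoff i j hij

theorem diagonal_mul_mul_diagonal_apply {R : Type*} [DecidableEq ι]
    [NonUnitalNonAssocSemiring R] (u : ι → R) (H : Matrix ι ι R) (i j : ι) :
    (diagonal u * H * diagonal u) i j = u i * H i j * u j := by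
  rw [mul_diagonal, diagonal_mul]

theorem mulVec_apply_le_of_eq_zero {H : Matrix ι ι ℝ} {v : ι → ℝ} {k : ι}
    (hoff : ∀ j, j ≠ k → H k j ≤ 0) (hv : 0 ≤ v) (hk : v k = 0) (j : ι) :
    (H *ᵥ v) k ≤ H k j * v j := by
  classical
  have hterm : ∀ l, H k l * v l ≤ 0 := by
    intro l
    obtain rfl | hl := eq_or_ne l k
    · rw [hk, mul_zero]
    · exact mul_nonpos_of_nonpos_of_nonneg (hoff l hl) (hv l)
  rw [mulVec, dotProduct, ← add_sum_erase _ _ (mem_univ j)]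
  exact add_le_of_nonpos_right (sum_nonpos fun l _ => hterm l)

theorem PosDef.nonneg_of_mulVec_nonneg {H : Matrix ι ι ℝ} (hH : H.PosDef)
    (hoff : ∀ i j, i ≠ j → H i j ≤ 0) {v : ι → ℝ} (hHv : 0 ≤ H *ᵥ v) : 0 ≤ v := by
  -- `v⁺` and `v⁻` have disjoint supports, so only off-diagonal entries enter the cross term.
  have hcross : v⁻ ⬝ᵥ (H *ᵥ v⁺) ≤ 0 := by
    simp only [dotProduct, mulVec, mul_sum]
    refine sum_nonpos fun i _ => sum_nonpos fun j _ => ?_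
    obtain rfl | hij := eq_or_ne i j
    · rcases le_total (v i) 0 with h | h
      · simp [Pi.posPart_apply, posPart_eq_zero.2 h]
      · simp [Pi.negPart_apply, negPart_eq_zero.2 h]
    · exact mul_nonpos_of_nonneg_of_nonpos (negPart_nonneg v i)
        (mul_nonpos_of_nonpos_of_nonneg (hoff i j hij) (posPart_nonneg v j))
  have hsplit : v⁻ ⬝ᵥ (H *ᵥ v) = v⁻ ⬝ᵥ (H *ᵥ v⁺) - v⁻ ⬝ᵥ (H *ᵥ v⁻) := by
    nth_rw 2 [← posPart_sub_negPart v]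
    rw [mulVec_sub, dotProduct_sub]
  have hneg : v⁻ = 0 := by
    by_contra h
    have hpos := hH.dotProduct_mulVec_pos h
    rw [star_trivial] at hpos
    linarith [dotProduct_nonneg_of_nonneg (negPart_nonneg v) hHv]
  rw [← posPart_sub_negPart v, hneg, sub_zero]
  exact posPart_nonneg v

theorem pos_of_mulVec_nonneg_of_subdiag_neg {n : ℕ} {H : Matrix (Fin n) (Fin n) ℝ}
    (hoff : ∀ i j, i ≠ j → H i j ≤ 0) (hsub : ∀ i j : Fin n, (j : ℕ) + 1 = i → H i j < 0)
    {v : Fin n → ℝ} (hv : 0 ≤ v) (hHv : 0 ≤ H *ᵥ v)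
    (hfirst : ∀ i : Fin n, (i : ℕ) = 0 → 0 < (H *ᵥ v) i) (i : Fin n) : 0 < v i := by
  obtain ⟨k, hk⟩ := i
  induction k with
  | zero =>
    refine (show 0 ≤ v ⟨0, hk⟩ from hv _).lt_of_ne' fun hz => ?_
    have hle := mulVec_apply_le_of_eq_zero (fun j hj => hoff _ j hj.symm) hv hz ⟨0, hk⟩
    rw [hz, mul_zero] at hle
    linarith [hfirst ⟨0, hk⟩ rfl]
  | succ k ih =>
    refine (show 0 ≤ v ⟨k + 1, hk⟩ from hv _).lt_of_ne' fun hz => ?_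
    have hle := mulVec_apply_le_of_eq_zero (fun j hj => hoff _ j hj.symm) hv hz ⟨k, by omega⟩
    have hlink := mul_neg_of_neg_of_pos (hsub ⟨k + 1, hk⟩ ⟨k, by omega⟩ rfl) (ih (by omega))
    linarith [show 0 ≤ (H *ᵥ v) ⟨k + 1, hk⟩ from hHv _]

end Matrix

open Matrix

theorem Fin.sum_ite_val_eq {R : Type*} [AddCommMonoid R] (n m : ℕ) (c : R) :
    (∑ j : Fin n, if (j : ℕ) = m then c else 0) = if m < n then c else 0 := by
  split_ifs with h
  · rw [Fintype.sum_eq_single ⟨m, h⟩ fun j hj => if_neg fun e => hj (Fin.ext e), if_pos rfl]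
  · exact sum_eq_zero fun j _ => if_neg fun e : (j : ℕ) = m => h (e ▸ j.isLt)

theorem Fin.sum_ite_val_add_one_eq {R : Type*} [AddCommMonoid R] (n m : ℕ) (c : R) :
    (∑ j : Fin n, if (j : ℕ) + 1 = m then c else 0) = if 0 < m ∧ m ≤ n then c else 0 := by
  cases m with
  | zero => simp
  | succ m => simpa using Fin.sum_ite_val_eq n m c

-- `a e₁ + b eₙ`; for `n = 1` both loads sit on the single mass.
def endLoads (n : ℕ) (a b : ℝ) : Fin n → ℝ := fun i =>
  (if (i : ℕ) = 0 then a else 0) + (if (i : ℕ) + 1 = n then b else 0)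

theorem stiffB_mulVec_one (n : ℕ) (K : Fin (n + 1) → ℝ) :
    stiffB n K *ᵥ 1 = endLoads n (K 0) (K (Fin.last n)) := by
  funext i
  have hrow : ∀ j, stiffB n K i j = (if j = i then K i.castSucc + K i.succ else 0)
      - (if (j : ℕ) = i + 1 then K i.succ else 0)
      - (if (j : ℕ) + 1 = i then K i.castSucc else 0) := by
    intro j
    have hj : (j : ℕ) + 1 = i → K j.succ = K i.castSucc := fun h => congrArg K (Fin.ext h)
    rw [stiffB, of_apply]
    split_ifs <;> first | omega | (rw [hj ‹_›]; ring) | ring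
  have hfirst : (i : ℕ) = 0 → K i.castSucc = K 0 := fun h => congrArg K (Fin.ext h)
  have hlast : (i : ℕ) + 1 = n → K i.succ = K (Fin.last n) := fun h => congrArg K (Fin.ext h)
  simp only [mulVec, dotProduct, Pi.one_apply, mul_one]
  rw [sum_congr rfl fun j _ => hrow j, sum_sub_distrib, sum_sub_distrib, sum_ite_eq',
    if_pos (mem_univ _), Fin.sum_ite_val_eq, Fin.sum_ite_val_add_one_eq, endLoads]
  clear hrow
  have := i.isLt
  split_ifs <;> first | omega | simp_all

theorem stiffB_eq_of_superdiag_of_mulVec_one {n : ℕ} {K : Fin (n + 1) → ℝ}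
    {A : Matrix (Fin n) (Fin n) ℝ} (hA : A.IsSymm) (htri : IsTridiagonal A)
    (hsuper : ∀ i j : Fin n, (i : ℕ) + 1 = j → A i j = -K i.succ)
    (hrow : A *ᵥ 1 = endLoads n (K 0) (K (Fin.last n))) :
    stiffB n K = A := by
  refine ext_of_offDiag_of_mulVec_one (fun i j hij => ?_) (by rw [stiffB_mulVec_one, hrow])
  have hij' : (i : ℕ) ≠ j := fun h => hij (Fin.ext h)
  rw [stiffB, of_apply, if_neg hij']
  split_ifs with h1 h2
  · exact (hsuper i j h1).symm
  · rw [← hA.apply, hsuper j i h2]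
  · exact (htri i j (by omega)).symm

-- The `else` branch is taken only for the last spring `i = n - 1`.
def springsOf {n : ℕ} (A : Matrix (Fin n) (Fin n) ℝ) (a b : ℝ) : Fin (n + 1) → ℝ :=
  Fin.cons a fun i => if h : (i : ℕ) + 1 < n then -A i ⟨i + 1, h⟩ else b

section springsOf

variable {n : ℕ} (A : Matrix (Fin n) (Fin n) ℝ) (a b : ℝ)

theorem springsOf_zero : springsOf A a b 0 = a := rfl

theorem springsOf_last (hn : 0 < n) : springsOf A a b (Fin.last n) = b := by
  obtain ⟨n, rfl⟩ := Nat.exists_eq_add_of_lt hn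
  rw [← Fin.succ_last, springsOf, Fin.cons_succ, dif_neg (by simp)]

theorem springsOf_succ {i j : Fin n} (h : (i : ℕ) + 1 = j) :
    springsOf A a b i.succ = -A i j := by
  rw [springsOf, Fin.cons_succ, dif_pos (h ▸ j.isLt)]
  congr 2
  exact Fin.ext h

theorem springsOf_pos (ha : 0 < a) (hb : 0 < b)
    (hA : ∀ i j : Fin n, (i : ℕ) + 1 = j → A i j < 0) (k : Fin (n + 1)) :
    0 < springsOf A a b k := by
  induction k using Fin.cases with
  | zero => exact ha
  | succ i =>
    rw [springsOf, Fin.cons_succ]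
    split_ifs with h
    · exact neg_pos.2 (hA _ _ rfl)
    · exact hb

theorem stiffB_springsOf (hn : 0 < n) (hA : A.IsSymm) (htri : IsTridiagonal A)
    (hrow : A *ᵥ 1 = endLoads n a b) : stiffB n (springsOf A a b) = A := by
  refine stiffB_eq_of_superdiag_of_mulVec_one hA htri (fun i j h => ?_) ?_
  · rw [springsOf_succ A a b h, neg_neg]
  · rw [springsOf_zero, springsOf_last A a b hn, hrow]

end springsOf

theorem stiffB_springsOf_diagonal_mul_mul_diagonal {n : ℕ} (hn : 0 < n)
    {H : Matrix (Fin n) (Fin n) ℝ} (hH : H.IsSymm) (htri : IsTridiagonal H) {u : Fin n → ℝ}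
    {a b : ℝ} (hu : H *ᵥ u = endLoads n a b) :
    stiffB n (springsOf (diagonal u * H * diagonal u) (a * u ⟨0, hn⟩) (b * u ⟨n - 1, by omega⟩))
      = diagonal u * H * diagonal u := by
  refine stiffB_springsOf _ _ _ hn (IsSymm.ext fun i j => ?_) (fun i j hij => ?_)
    (funext fun i => ?_)
  · rw [diagonal_mul_mul_diagonal_apply, diagonal_mul_mul_diagonal_apply, hH.apply]
    ring
  · rw [diagonal_mul_mul_diagonal_apply, htri i j hij, mul_zero, zero_mul]
  · have hDu : diagonal u *ᵥ 1 = u :=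
      funext fun i => by rw [mulVec_diagonal, Pi.one_apply, mul_one]
    rw [← mulVec_mulVec, ← mulVec_mulVec, hDu, hu, mulVec_diagonal, endLoads, endLoads]
    have hfirst : (i : ℕ) = 0 → u i = u ⟨0, hn⟩ := fun h => congrArg u (Fin.ext h)
    have hlast : (i : ℕ) + 1 = n → u i = u ⟨n - 1, by omega⟩ :=
      fun h => congrArg u (Fin.ext (by simp; omega))
    split_ifs with h0 h1 h1
    · rw [← hfirst h0, ← hlast h1]; ring
    · rw [← hfirst h0]; ring
    · rw [← hlast h1]; ring
    · ring

theorem assocH_eq_of_stiffB_eq {n : ℕ} {u : Fin n → ℝ} (hu : ∀ i, 0 < u i)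
    {K : Fin (n + 1) → ℝ} {H : Matrix (Fin n) (Fin n) ℝ}
    (hK : stiffB n K = diagonal u * H * diagonal u) : assocH n (fun i => u i ^ 2) K = H := by
  ext i j
  rw [assocH, hK, mul_diagonal, diagonal_mul, diagonal_mul_mul_diagonal_apply,
    Real.sqrt_sq (hu i).le, Real.sqrt_sq (hu j).le]
  field_simp [(hu i).ne', (hu j).ne']

theorem endLoads_nonneg {n : ℕ} {a b : ℝ} (ha : 0 ≤ a) (hb : 0 ≤ b) : 0 ≤ endLoads n a b :=
  fun i => add_nonneg (by split_ifs <;> simp [ha]) (by split_ifs <;> simp [hb])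

theorem endLoads_pos_of_val_eq_zero {n : ℕ} {a b : ℝ} (ha : 0 < a) (hb : 0 ≤ b) {i : Fin n}
    (hi : (i : ℕ) = 0) : 0 < endLoads n a b i := by
  rw [endLoads, if_pos hi]
  exact add_pos_of_pos_of_nonneg ha (by split_ifs <;> simp [hb])

theorem MemTA.apply_nonpos_of_ne {n : ℕ} {H : Matrix (Fin n) (Fin n) ℝ} (hH : MemTA H)
    {i j : Fin n} (hij : i ≠ j) : H i j ≤ 0 := by
  have hij' : (i : ℕ) ≠ j := fun h => hij (Fin.ext h)
  by_cases hadj : (i : ℕ) + 1 = j ∨ (j : ℕ) + 1 = i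
  · exact (hH.2.2.1 i j hadj).le
  · exact (hH.2.1 i j (by omega)).le

/-- Given a matrix `H̃ ∈ T_{A,n}` and `α, β > 0`, there is a spring-mass system with positive
masses and positive spring constants whose associated matrix is `H̃` and which satisfies
`K_1/√(m_1) = α` and `K_{n+1}/√(m_n) = β`. -/
theorem exists_spring_mass_system_of_memTA
    (n : ℕ) (hn : 1 ≤ n) (Ht : Matrix (Fin n) (Fin n) ℝ) (hHt : MemTA Ht)
    (α β : ℝ) (hα : 0 < α) (hβ : 0 < β) :
    ∃ (m : Fin n → ℝ) (K : Fin (n + 1) → ℝ),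
      (∀ i, 0 < m i) ∧ (∀ j, 0 < K j) ∧ assocH n m K = Ht ∧
      K 0 / Real.sqrt (m ⟨0, by omega⟩) = α ∧
      K (Fin.last n) / Real.sqrt (m ⟨n - 1, by omega⟩) = β := by
  have hoff : ∀ i j, i ≠ j → Ht i j ≤ 0 := fun _ _ => hHt.apply_nonpos_of_ne
  obtain ⟨hsymm, htri, hadj, hpd⟩ := hHt
  obtain ⟨u, hu⟩ := mulVec_surjective_iff_isUnit.2 hpd.isUnit (endLoads n α β)
  have hloads := endLoads_nonneg (n := n) hα.le hβ.le
  have hu_pos : ∀ i, 0 < u i :=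
    pos_of_mulVec_nonneg_of_subdiag_neg hoff (fun i j h => hadj i j (Or.inr h))
      (hpd.nonneg_of_mulVec_nonneg hoff (hu ▸ hloads)) (hu ▸ hloads)
      (fun i hi => hu ▸ endLoads_pos_of_val_eq_zero hα hβ.le hi)
  have hsqrt : ∀ i, Real.sqrt (u i ^ 2) = u i := fun i => Real.sqrt_sq (hu_pos i).le
  refine ⟨fun i => u i ^ 2,
    springsOf (diagonal u * Ht * diagonal u) (α * u ⟨0, hn⟩) (β * u ⟨n - 1, by omega⟩),
    fun i => pow_pos (hu_pos i) 2,
    springsOf_pos _ _ _ (mul_pos hα (hu_pos _)) (mul_pos hβ (hu_pos _)) (fun i j h => ?_),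
    assocH_eq_of_stiffB_eq hu_pos (stiffB_springsOf_diagonal_mul_mul_diagonal hn hsymm htri hu),
    ?_, ?_⟩
  · rw [diagonal_mul_mul_diagonal_apply]
    exact mul_neg_of_neg_of_pos (mul_neg_of_pos_of_neg (hu_pos i) (hadj i j (Or.inl h)))
      (hu_pos j)
  · rw [springsOf_zero, hsqrt, mul_div_cancel_right₀ _ (hu_pos _).ne']
  · rw [springsOf_last _ _ _ hn, hsqrt, mul_div_cancel_right₀ _ (hu_pos _).ne']
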